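/- arXiv:1807.07008 — 6 statements merged into one kernel-verified Lean document; each statement's English description precedes it below -/
import Mathlib

section
/- Let K be an algebraically closed field with char(K) ≠ 2, let g be a positive integer, and let α_1, …, α_{2g+1} be pairwise distinct elements of K. Then the quotient of the polynomial ring K[x, T_1, …, T_{2g+1}] by the ideal generated by the 2g+1 polynomials T_i^2 − (x − α_i) (1 ≤ i ≤ 2g+1) is an integral domain; equivalently, this ideal is prime, so the affine set in 𝔸^{2g+1} cut out by the equations z_1^2 + α_1 = z_2^2 + α_2 = ⋯ = z_{2g+1}^2 + α_{2g+1} is irreducible. -/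
universe u


section Quad
variable {F Ω : Type*} [Field F] [Field Ω] [Algebra F Ω]
  {t0 : Ω} {f0 : F} (ht : t0 ^ 2 = algebraMap F Ω f0) (hns : ¬ IsSquare f0)

include ht hns in
lemma one_t0_indep (a b : F) (h : algebraMap F Ω a + algebraMap F Ω b * t0 = 0) :
    a = 0 ∧ b = 0 := by
  by_cases hb : b = 0
  · subst hb
    simp only [map_zero, zero_mul, add_zero] at h
    exact ⟨(algebraMap F Ω).injective (by rw [h, map_zero]), rfl⟩
  · exfalso
    apply hns
    have hbne : algebraMap F Ω b ≠ 0 := by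
      simpa using (algebraMap F Ω).injective.ne hb
    have ht0 : t0 = algebraMap F Ω (-a / b) := by
      rw [map_div₀, map_neg, eq_div_iff hbne, mul_comm]
      linear_combination h
    refine ⟨-a / b, ?_⟩
    have h2 := ht.symm
    rw [ht0, ← map_pow] at h2
    have h3 := (algebraMap F Ω).injective h2.symm
    rw [← sq, h3]

include ht hns in
lemma mem_adjoin_quad {u : Ω} (hu : u ∈ IntermediateField.adjoin F {t0}) :
    ∃ a b : F, u = algebraMap F Ω a + algebraMap F Ω b * t0 := by
  induction hu using IntermediateField.adjoin_induction with
  | mem x hx =>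
    rw [Set.mem_singleton_iff] at hx
    exact ⟨0, 1, by simp [hx]⟩
  | algebraMap x => exact ⟨x, 0, by simp⟩
  | add x y hx hy ihx ihy =>
    obtain ⟨a, b, rfl⟩ := ihx
    obtain ⟨c, d, rfl⟩ := ihy
    exact ⟨a + c, b + d, by push_cast [map_add]; ring⟩
  | mul x y hx hy ihx ihy =>
    obtain ⟨a, b, rfl⟩ := ihx
    obtain ⟨c, d, rfl⟩ := ihy
    refine ⟨a * c + b * d * f0, a * d + b * c, ?_⟩
    simp only [map_add, map_mul]
    linear_combination (algebraMap F Ω b * algebraMap F Ω d) * ht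
  | inv x hx ihx =>
    obtain ⟨a, b, rfl⟩ := ihx
    by_cases hz : algebraMap F Ω a + algebraMap F Ω b * t0 = 0
    · exact ⟨0, 0, by simp [hz]⟩
    · have hden : a ^ 2 - b ^ 2 * f0 ≠ 0 := by
        intro hd
        by_cases hb : b = 0
        · apply hz
          have ha : a = 0 := by
            have h2 : a ^ 2 = 0 := by rw [← hd, hb]; ring
            exact pow_eq_zero_iff two_ne_zero |>.mp h2
          simp [ha, hb]
        · apply hns
          refine ⟨a / b, ?_⟩
          field_simp
          linear_combination -hd
      refine ⟨a / (a ^ 2 - b ^ 2 * f0), -b / (a ^ 2 - b ^ 2 * f0), ?_⟩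
      have hdenΩ : algebraMap F Ω (a ^ 2 - b ^ 2 * f0) ≠ 0 := by
        simpa using (algebraMap F Ω).injective.ne hden
      refine (eq_inv_of_mul_eq_one_left ?_).symm
      rw [map_div₀, map_div₀, map_neg, map_sub, map_mul, map_pow, map_pow] at *
      field_simp
      ring_nf
      linear_combination (-(algebraMap F Ω b ^ 2)) * ht

end Quad


-- the reindexing bijection
def finsetSucc (n : ℕ) (p : Finset (Fin n) × Bool) : Finset (Fin (n + 1)) :=
  if p.2 then insert 0 (p.1.map (Fin.succEmb n)) else p.1.map (Fin.succEmb n)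

lemma finsetSucc_def (n : ℕ) (p : Finset (Fin n) × Bool) :
  finsetSucc n p = if p.2 then insert 0 (p.1.map (Fin.succEmb n)) else p.1.map (Fin.succEmb n) := rfl

lemma zero_not_mem_map_succ {n : ℕ} (T : Finset (Fin n)) :
    (0 : Fin (n + 1)) ∉ T.map (Fin.succEmb n) := by
  simp only [Finset.mem_map]
  rintro ⟨i, -, hi⟩
  exact Fin.succ_ne_zero i hi

lemma finsetSucc_bijective (n : ℕ) : Function.Bijective (finsetSucc n) := by
  constructor
  · rintro ⟨T, b⟩ ⟨T', b'⟩ h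
    simp only [finsetSucc] at h
    have hb : b = b' := by
      by_contra hbb
      rcases Bool.eq_false_or_eq_true b with rfl | rfl <;>
        rcases Bool.eq_false_or_eq_true b' with rfl | rfl <;> simp_all
      · exact zero_not_mem_map_succ T' (h ▸ Finset.mem_insert_self 0 _)
      · exact zero_not_mem_map_succ T (h.symm ▸ Finset.mem_insert_self 0 _)
    subst hb
    have hT : T = T' := by
      rcases Bool.eq_false_or_eq_true b with rfl | rfl <;>
        simp only [if_true, if_false, Bool.false_eq_true] at h
      · have := congrArg (Finset.erase · (0 : Fin (n+1))) h
        simp only [Finset.erase_insert (zero_not_mem_map_succ T),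
          Finset.erase_insert (zero_not_mem_map_succ T')] at this
        exact Finset.map_injective _ this
      · exact Finset.map_injective _ h
    rw [hT]
  · intro S
    classical
    have hrep : ∃ T : Finset (Fin n), T.map (Fin.succEmb n) = S.erase 0 := by
      refine ⟨(S.erase 0).preimage (Fin.succEmb n) (Function.Injective.injOn (Fin.succEmb n).injective), ?_⟩
      ext x
      simp only [Finset.mem_map, Finset.mem_preimage, Finset.mem_erase]
      constructor
      · rintro ⟨y, ⟨hy1, hy2⟩, rfl⟩
        exact ⟨hy1, hy2⟩
      · rintro ⟨hx0, hxS⟩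
        refine ⟨x.pred hx0, ?_, Fin.succ_pred x hx0⟩
        simp only [Fin.coe_succEmb, Fin.succ_pred]
        exact ⟨hx0, hxS⟩
    obtain ⟨T, hT⟩ := hrep
    by_cases h0 : (0 : Fin (n+1)) ∈ S
    · exact ⟨(T, true), by simp only [finsetSucc, if_true, hT, Finset.insert_erase h0]⟩
    · exact ⟨(T, false), by simp only [finsetSucc, if_false, Bool.false_eq_true, hT, Finset.erase_eq_of_notMem h0]⟩

open Polynomial

lemma not_isSquare_prod_X_sub_C {K : Type*} [Field K] {n : ℕ} (α : Fin n → K)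
    (hα : Function.Injective α) (S : Finset (Fin n)) (hS : S.Nonempty) :
    ¬ IsSquare (algebraMap (Polynomial K) (RatFunc K) (∏ i ∈ S, (X - C (α i)))) := by
  rintro ⟨r, hr⟩
  set d : Polynomial K := ∏ i ∈ S, (X - C (α i)) with hd
  -- r is integral over K[X]
  have hint : IsIntegral (Polynomial K) r := by
    refine ⟨X ^ 2 - C d, ?_, ?_⟩
    · apply Polynomial.monic_X_pow_sub_C
      · exact two_ne_zero
    · simp only [eval₂_sub, eval₂_X_pow, eval₂_C, hr]
      ring
  obtain ⟨y, hy⟩ := IsIntegrallyClosed.isIntegral_iff.mp hint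
  have hyd : y * y = d := by
    apply IsFractionRing.injective (Polynomial K) (RatFunc K)
    rw [map_mul, hy, ← hr]
  have hsf : Squarefree d := by
    apply Polynomial.Separable.squarefree
    rw [hd]
    exact separable_prod_X_sub_C_iff'.mpr fun x _ y _ h => hα h
  have hu : IsUnit y := hsf y ⟨1, by rw [hyd.symm]; ring⟩
  have hdu : IsUnit d := by rw [← hyd]; exact hu.mul hu
  -- but d is monic of positive degree
  have hm : d.Monic := monic_prod_of_monic _ _ fun i _ => monic_X_sub_C (α i)
  have hdeg : d.natDegree = S.card := by
    rw [hd, natDegree_prod _ _ fun i _ => X_sub_C_ne_zero (α i)]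
    simp
  rw [hm.isUnit_iff] at hdu
  rw [hdu] at hdeg
  simp only [natDegree_one] at hdeg
  have := hS.card_pos
  omega


theorem prods_linearIndependent :
    ∀ (n : ℕ) (F Ω : Type u) [Field F] [Field Ω] [Algebra F Ω],
      (2 : F) ≠ 0 →
      ∀ (t : Fin n → Ω) (f : Fin n → F),
        (∀ i, t i ^ 2 = algebraMap F Ω (f i)) →
        (∀ S : Finset (Fin n), S.Nonempty → ¬ IsSquare (∏ i ∈ S, f i)) →
        LinearIndependent F (fun S : Finset (Fin n) => ∏ i ∈ S, t i) := by
  intro n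
  induction n with
  | zero =>
    intro F Ω _ _ _ h2 t f ht hns
    rw [Fintype.linearIndependent_iff]
    intro c hc S
    have hall : ∀ S' : Finset (Fin 0), S' = S := fun S' => by
      rw [Finset.eq_empty_of_isEmpty S', Finset.eq_empty_of_isEmpty S]
    rw [Finset.sum_eq_single S (fun b _ hb => absurd (hall b) hb)
      (fun h => absurd (Finset.mem_univ S) h)] at hc
    have h1 : (∏ i ∈ S, t i) = 1 := by rw [Finset.eq_empty_of_isEmpty S]; simp
    rw [h1] at hc
    simpa [smul_eq_zero] using hc
  | succ n ih =>
    intro F Ω _ _ _ h2 t f ht hns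
    classical
    have h1 : ¬ IsSquare (f 0) := by
      simpa using hns {0} ⟨0, Finset.mem_singleton_self 0⟩
    set F' : IntermediateField F Ω := IntermediateField.adjoin F {t 0} with hF'
    have ht0mem : t 0 ∈ F' := IntermediateField.mem_adjoin_simple_self F (t 0)
    set τ : F' := ⟨t 0, ht0mem⟩ with hτ
    have h2' : (2 : F') ≠ 0 := by
      intro h
      apply h2
      have h0 : algebraMap F F' 2 = 0 := by rw [map_ofNat]; exact_mod_cast h
      exact (algebraMap F F').injective (by rw [h0, map_zero])
    have hts : ∀ i : Fin n, t i.succ ^ 2 = algebraMap F' Ω (algebraMap F F' (f i.succ)) := by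
      intro i
      rw [← IsScalarTower.algebraMap_apply F F' Ω]
      exact ht i.succ
    -- products over mapped sets
    have hprodmap : ∀ S : Finset (Fin n), (∏ i ∈ S.map (Fin.succEmb n), f i) = ∏ i ∈ S, f i.succ := by
      intro S; rw [Finset.prod_map]; rfl
    have hprodmapt : ∀ S : Finset (Fin n), (∏ i ∈ S.map (Fin.succEmb n), t i) = ∏ i ∈ S, t i.succ := by
      intro S; rw [Finset.prod_map]; rfl
    have hns' : ∀ S : Finset (Fin n), S.Nonempty →
        ¬ IsSquare (∏ i ∈ S, algebraMap F F' (f i.succ)) := by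
      intro S hS hsq
      obtain ⟨w, hw⟩ := hsq
      obtain ⟨a, b, hab⟩ := mem_adjoin_quad (ht 0) h1 w.2
      set d : F := ∏ i ∈ S, f i.succ with hd
      have hwΩ : algebraMap F Ω d = (algebraMap F' Ω w) * (algebraMap F' Ω w) := by
        rw [← map_mul, ← hw, ← map_prod, ← IsScalarTower.algebraMap_apply F F' Ω]
      have hcoe : algebraMap F' Ω w = algebraMap F Ω a + algebraMap F Ω b * t 0 := hab
      have key : algebraMap F Ω (a^2 + b^2 * f 0 - d) + algebraMap F Ω (2*a*b) * t 0 = 0 := by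
        simp only [map_sub, map_add, map_mul, map_pow, map_ofNat]
        rw [hcoe] at hwΩ
        linear_combination -hwΩ - (algebraMap F Ω b)^2 * ht 0
      obtain ⟨e1, e2⟩ := one_t0_indep (ht 0) h1 _ _ key
      have hab0 : a = 0 ∨ b = 0 := by
        rcases mul_eq_zero.mp e2 with h | h
        · rcases mul_eq_zero.mp h with h' | h'
          · exact absurd h' h2
          · exact Or.inl h'
        · exact Or.inr h
      rcases hab0 with rfl | rfl
      · -- d = b^2 * f 0, so f 0 * d is a square
        apply hns (insert 0 (S.map (Fin.succEmb n)))
          ⟨0, Finset.mem_insert_self 0 _⟩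
        rw [Finset.prod_insert (zero_not_mem_map_succ S), hprodmap]
        refine ⟨b * f 0, ?_⟩
        have : d = b^2 * f 0 := by linear_combination -e1
        rw [← hd, this]; ring
      · -- d = a^2
        apply hns (S.map (Fin.succEmb n)) hS.map
        rw [hprodmap]
        refine ⟨a, ?_⟩
        have : d = a^2 := by linear_combination -e1
        rw [← hd, this]; ring
    have ihF' := ih F' Ω h2' (fun i => t i.succ) (fun i => algebraMap F F' (f i.succ)) hts
      (by intro S hS h; exact hns' S hS (by rwa [Finset.prod_congr rfl (fun i _ => rfl)] at h))
    -- combine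
    rw [Fintype.linearIndependent_iff]
    intro c hc S
    -- rewrite hc as a sum over (T, b)
    have hsum : ∑ p : Finset (Fin n) × Bool, c (finsetSucc n p) • ∏ i ∈ finsetSucc n p, t i = 0 := by
      rw [Fintype.sum_bijective (finsetSucc n) (finsetSucc_bijective n) _
        (fun S => c S • ∏ i ∈ S, t i) (fun p => rfl)]
      exact hc
    rw [Fintype.sum_prod_type] at hsum
    have hsum2 : ∑ T : Finset (Fin n),
        (algebraMap F F' (c (T.map (Fin.succEmb n)))
          + algebraMap F F' (c (insert 0 (T.map (Fin.succEmb n)))) * τ) • ∏ i ∈ T, t i.succ = 0 := by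
      rw [← hsum]
      apply Finset.sum_congr rfl
      intro T _
      rw [Fintype.sum_bool]
      simp only [finsetSucc_def]
      simp only [if_true, Bool.false_eq_true, if_false]
      rw [Finset.prod_insert (zero_not_mem_map_succ T), hprodmapt]
      -- smul algebra computations
      rw [Algebra.smul_def, Algebra.smul_def, Algebra.smul_def]
      rw [RingHom.map_add, RingHom.map_mul]
      rw [← IsScalarTower.algebraMap_apply F F' Ω, ← IsScalarTower.algebraMap_apply F F' Ω]
      have hτΩ : algebraMap F' Ω τ = t 0 := rfl
      rw [hτΩ]
      ring
    have hzero := Fintype.linearIndependent_iff.mp ihF' _ hsum2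
    -- extract
    have hz : ∀ T : Finset (Fin n),
        c (T.map (Fin.succEmb n)) = 0 ∧ c (insert 0 (T.map (Fin.succEmb n))) = 0 := by
      intro T
      have h0 := hzero T
      have hΩ : algebraMap F Ω (c (T.map (Fin.succEmb n)))
          + algebraMap F Ω (c (insert 0 (T.map (Fin.succEmb n)))) * t 0 = 0 := by
        have := congrArg (algebraMap F' Ω) h0
        rw [RingHom.map_zero] at this
        rw [RingHom.map_add, RingHom.map_mul] at this
        rw [← IsScalarTower.algebraMap_apply F F' Ω, ← IsScalarTower.algebraMap_apply F F' Ω] at this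
        exact this
      exact one_t0_indep (ht 0) h1 _ _ hΩ
    obtain ⟨p, hp⟩ := (finsetSucc_bijective n).2 S
    rcases p with ⟨T, b⟩
    rcases Bool.eq_false_or_eq_true b with rfl | rfl <;>
      rw [finsetSucc_def] at hp <;> simp only [if_true, Bool.false_eq_true, if_false] at hp <;>
      rw [← hp]
    · exact (hz T).2
    · exact (hz T).1


noncomputable section Red
open MvPolynomial
variable {K : Type*} [Field K] {n : ℕ}

def mS (S : Finset (Fin n)) : MvPolynomial (Option (Fin n)) K :=
  ∏ i ∈ S, MvPolynomial.X (some i)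

def embX : Polynomial K →+* MvPolynomial (Option (Fin n)) K :=
  Polynomial.eval₂RingHom MvPolynomial.C (MvPolynomial.X none)

def theta (c : Finset (Fin n) → Polynomial K) : MvPolynomial (Option (Fin n)) K :=
  ∑ S : Finset (Fin n), embX (c S) * mS S

def relIdeal (α : Fin n → K) : Ideal (MvPolynomial (Option (Fin n)) K) :=
  Ideal.span (Set.range fun i : Fin n =>
    MvPolynomial.X (some i) ^ 2 -
      (MvPolynomial.X (none : Option (Fin n)) - MvPolynomial.C (α i)))

lemma theta_single (T : Finset (Fin n)) (p : Polynomial K) :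
    theta (Pi.single T p) = embX p * mS T := by
  rw [theta, Finset.sum_eq_single T]
  · rw [Pi.single_eq_same]
  · intro b _ hb
    rw [Pi.single_eq_of_ne hb, map_zero, zero_mul]
  · exact fun h => absurd (Finset.mem_univ T) h

lemma theta_add (c1 c2 : Finset (Fin n) → Polynomial K) :
    theta (c1 + c2) = theta c1 + theta c2 := by
  rw [theta, theta, theta, ← Finset.sum_add_distrib]
  exact Finset.sum_congr rfl fun S _ => by rw [Pi.add_apply, map_add, add_mul]

lemma theta_zero : theta (0 : Finset (Fin n) → Polynomial K) = 0 := by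
  rw [theta]
  exact Finset.sum_eq_zero fun S _ => by rw [Pi.zero_apply, map_zero, zero_mul]

lemma sum_red (α : Fin n → K) {ι : Type*} (s : Finset ι)
    (g : ι → MvPolynomial (Option (Fin n)) K)
    (h : ∀ a ∈ s, ∃ c, g a - theta c ∈ relIdeal α) :
    ∃ c, (∑ a ∈ s, g a) - theta c ∈ relIdeal α := by
  classical
  induction s using Finset.induction_on with
  | empty => exact ⟨0, by rw [theta_zero, Finset.sum_empty, sub_zero]; exact zero_mem _⟩
  | @insert a s' ha ih =>
    obtain ⟨c1, hc1⟩ := h a (Finset.mem_insert_self a s')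
    obtain ⟨c2, hc2⟩ := ih fun b hb => h b (Finset.mem_insert_of_mem hb)
    refine ⟨c1 + c2, ?_⟩
    rw [Finset.sum_insert ha, theta_add]
    convert add_mem hc1 hc2 using 1
    ring

lemma embX_X : (embX (K := K) (n := n)) Polynomial.X = MvPolynomial.X none := by
  rw [embX, Polynomial.coe_eval₂RingHom, Polynomial.eval₂_X]

lemma embX_C (a : K) : (embX (n := n)) (Polynomial.C a) = MvPolynomial.C a := by
  rw [embX, Polynomial.coe_eval₂RingHom, Polynomial.eval₂_C]

lemma mul_X_red (α : Fin n → K) (T : Finset (Fin n)) (p : Polynomial K) (j : Option (Fin n)) :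
    ∃ c', (embX p * mS T) * MvPolynomial.X j - theta c' ∈ relIdeal α := by
  classical
  match j with
  | none =>
    refine ⟨Pi.single T (p * Polynomial.X), ?_⟩
    rw [theta_single, map_mul, embX_X]
    have : embX p * mS T * MvPolynomial.X none - embX p * MvPolynomial.X none * mS T = 0 := by
      ring
    rw [this]
    exact zero_mem _
  | some i =>
    by_cases hi : i ∈ T
    · refine ⟨Pi.single (T.erase i) ((Polynomial.X - Polynomial.C (α i)) * p), ?_⟩
      have hT : mS (K := K) T = MvPolynomial.X (some i) * mS (T.erase i) :=
        (Finset.mul_prod_erase T _ hi).symm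
      have key : embX p * mS T * MvPolynomial.X (some i)
          - theta (Pi.single (T.erase i) ((Polynomial.X - Polynomial.C (α i)) * p))
          = (embX p * mS (T.erase i)) *
            (MvPolynomial.X (some i) ^ 2 -
              (MvPolynomial.X (none : Option (Fin n)) - MvPolynomial.C (α i))) := by
        rw [theta_single, map_mul, map_sub, embX_X, embX_C, hT]
        ring
      rw [key]
      exact Ideal.mul_mem_left _ _ (Ideal.subset_span ⟨i, rfl⟩)
    · refine ⟨Pi.single (insert i T) p, ?_⟩
      rw [theta_single]
      have hins : mS (K := K) (insert i T) = MvPolynomial.X (some i) * mS T := by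
        rw [mS, mS, Finset.prod_insert hi]
      have : embX p * mS T * MvPolynomial.X (some i)
          - embX p * mS (insert i T) = 0 := by
        rw [hins]; ring
      rw [this]
      exact zero_mem _

lemma reduction (α : Fin n → K) (q : MvPolynomial (Option (Fin n)) K) :
    ∃ c, q - theta c ∈ relIdeal α := by
  classical
  induction q using MvPolynomial.induction_on with
  | C a =>
    refine ⟨Pi.single ∅ (Polynomial.C a), ?_⟩
    rw [theta_single, embX_C, mS, Finset.prod_empty, mul_one, sub_self]
    exact zero_mem _
  | add p q hp hq =>
    obtain ⟨c1, hc1⟩ := hp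
    obtain ⟨c2, hc2⟩ := hq
    refine ⟨c1 + c2, ?_⟩
    rw [theta_add]
    convert add_mem hc1 hc2 using 1
    ring
  | mul_X p j hp =>
    obtain ⟨c, hc⟩ := hp
    obtain ⟨c', hc'⟩ := sum_red α Finset.univ
      (fun S => embX (c S) * mS S * MvPolynomial.X j)
      (fun S _ => mul_X_red α S (c S) j)
    refine ⟨c', ?_⟩
    have hθ : theta c * MvPolynomial.X j = ∑ S : Finset (Fin n), embX (c S) * mS S * MvPolynomial.X j := by
      rw [theta, Finset.sum_mul]
    have : p * MvPolynomial.X j - theta c'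
        = (p - theta c) * MvPolynomial.X j
          + ((∑ S : Finset (Fin n), embX (c S) * mS S * MvPolynomial.X j) - theta c') := by
      rw [← hθ]; ring
    rw [this]
    exact add_mem (Ideal.mul_mem_right _ _ hc) hc'
end Red

-- ======================= main theorem =======================

lemma two_ne_zero_field {K : Type*} [Field K] (hK : ringChar K ≠ 2) : (2 : K) ≠ 0 := by
  intro h
  have hdvd : ringChar K ∣ 2 := (ringChar.spec K 2).mp (by exact_mod_cast h)
  rcases (Nat.dvd_prime Nat.prime_two).mp hdvd with h1 | h2
  · exact CharP.char_ne_one K (ringChar K) h1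
  · exact hK h2

theorem relIdeal_eq_ker {K : Type u} [Field K] (hK : ringChar K ≠ 2)
    (n : ℕ) (α : Fin n → K) (hα : Function.Injective α) :
    (relIdeal α).IsPrime := by
  classical
  set Ω := AlgebraicClosure (RatFunc K) with hΩ
  -- coefficient maps
  set ι₁ : Polynomial K →+* RatFunc K := algebraMap (Polynomial K) (RatFunc K) with hι₁
  set ι₂ : Polynomial K →+* Ω := (algebraMap (RatFunc K) Ω).comp ι₁ with hι₂
  set ιK : K →+* Ω := ι₂.comp Polynomial.C with hιK
  -- square roots
  have hex : ∀ i : Fin n, ∃ z : Ω, z ^ 2 = ι₂ (Polynomial.X - Polynomial.C (α i)) := by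
    intro i
    exact IsAlgClosed.exists_pow_nat_eq _ (by norm_num)
  choose t htsq using hex
  set f : Fin n → RatFunc K := fun i => ι₁ (Polynomial.X - Polynomial.C (α i)) with hf
  have htf : ∀ i, t i ^ 2 = algebraMap (RatFunc K) Ω (f i) := fun i => htsq i
  have hnsq : ∀ S : Finset (Fin n), S.Nonempty → ¬ IsSquare (∏ i ∈ S, f i) := by
    intro S hS
    have : (∏ i ∈ S, f i) = ι₁ (∏ i ∈ S, (Polynomial.X - Polynomial.C (α i))) := by
      rw [map_prod]
    rw [this]
    exact not_isSquare_prod_X_sub_C α hα S hS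
  have h2K : (2 : K) ≠ 0 := two_ne_zero_field hK
  have h2R : (2 : RatFunc K) ≠ 0 := by
    intro h
    apply h2K
    have h2P : (2 : Polynomial K) = 0 :=
      IsFractionRing.injective (Polynomial K) (RatFunc K)
        (by rw [map_ofNat]; exact_mod_cast h)
    have := congrArg (Polynomial.eval 0) h2P
    simpa using this
  have LI := prods_linearIndependent n (RatFunc K) Ω h2R t f htf hnsq
  -- the evaluation hom
  set φ : MvPolynomial (Option (Fin n)) K →+* Ω :=
    MvPolynomial.eval₂Hom ιK (fun o => Option.elim o (ι₂ Polynomial.X) t) with hφ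
  have hφX : ∀ i : Fin n, φ (MvPolynomial.X (some i)) = t i := fun i =>
    MvPolynomial.eval₂Hom_X' _ _ _
  have hφnone : φ (MvPolynomial.X (none : Option (Fin n))) = ι₂ Polynomial.X :=
    MvPolynomial.eval₂Hom_X' _ _ _
  have hφemb : ∀ p : Polynomial K, φ (embX p) = ι₂ p := by
    have : φ.comp (embX (K := K) (n := n)) = ι₂ := by
      apply Polynomial.ringHom_ext
      · intro a
        rw [RingHom.comp_apply, embX_C]
        exact MvPolynomial.eval₂Hom_C _ _ _
      · rw [RingHom.comp_apply, embX_X]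
        exact hφnone
    intro p
    rw [← this, RingHom.comp_apply]
  -- I ⊆ ker φ
  have hIker : relIdeal α ≤ RingHom.ker φ := by
    rw [relIdeal, Ideal.span_le]
    rintro _ ⟨i, rfl⟩
    rw [SetLike.mem_coe, RingHom.mem_ker, map_sub, map_sub, map_pow, hφX, hφnone]
    have : φ (MvPolynomial.C (α i)) = ιK (α i) := MvPolynomial.eval₂Hom_C _ _ _
    rw [this, htsq i]
    simp only [hιK, hι₂, RingHom.comp_apply, map_sub]
    ring
  -- ker φ ⊆ I
  have hkerI : RingHom.ker φ ≤ relIdeal α := by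
    intro q hq
    rw [RingHom.mem_ker] at hq
    obtain ⟨c, hc⟩ := reduction α q
    have hφθ : φ (theta c) = 0 := by
      have h1 : φ (q - theta c) = 0 := hIker hc
      rw [map_sub, hq, zero_sub, neg_eq_zero] at h1
      exact h1
    have hφθ2 : ∑ S : Finset (Fin n), ι₁ (c S) • ∏ i ∈ S, t i = 0 := by
      rw [← hφθ, theta, map_sum]
      apply Finset.sum_congr rfl
      intro S _
      rw [map_mul, hφemb, Algebra.smul_def, hι₂, RingHom.comp_apply]
      congr 1
      rw [mS, map_prod]
      exact Finset.prod_congr rfl fun i _ => (hφX i).symm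
    have hc0 : ∀ S : Finset (Fin n), c S = 0 := by
      intro S
      have := Fintype.linearIndependent_iff.mp LI (fun S => ι₁ (c S)) hφθ2 S
      exact IsFractionRing.injective (Polynomial K) (RatFunc K) (by rw [this, map_zero])
    have : theta c = 0 := by
      rw [theta]
      exact Finset.sum_eq_zero fun S _ => by rw [hc0 S, map_zero, zero_mul]
    rwa [this, sub_zero] at hc
  have : relIdeal α = RingHom.ker φ := le_antisymm hIker hkerI
  rw [this]
  exact RingHom.ker_isPrime φ

/-- Let `K` be an algebraically closed field of characteristic `≠ 2`,
`g ≥ 1`, and let `α 1, …, α (2g+1)` be pairwise distinct elements of `K`.  Then the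
ideal of `K[x, T_1, …, T_{2g+1}]` generated by the `2g+1` polynomials
`T_i^2 - (x - α i)` is prime; equivalently, the quotient ring is an integral
domain, so the affine set cut out by `z_1^2 + α_1 = ⋯ = z_{2g+1}^2 + α_{2g+1}`
is irreducible.  (The variable `x` is indexed by `none`, and `T_i` by `some i`.) -/
theorem span_squares_sub_isPrime_isDomain
    {K : Type*} [Field K] [IsAlgClosed K] (hK : ringChar K ≠ 2)
    (g : ℕ) (hg : 0 < g) (α : Fin (2 * g + 1) → K) (hα : Function.Injective α) :
    (Ideal.span (Set.range fun i : Fin (2 * g + 1) =>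
        MvPolynomial.X (some i) ^ 2 -
          (MvPolynomial.X (none : Option (Fin (2 * g + 1))) -
            MvPolynomial.C (α i)))).IsPrime ∧
    IsDomain (MvPolynomial (Option (Fin (2 * g + 1))) K ⧸
      Ideal.span (Set.range fun i : Fin (2 * g + 1) =>
        MvPolynomial.X (some i) ^ 2 -
          (MvPolynomial.X (none : Option (Fin (2 * g + 1))) -
            MvPolynomial.C (α i)))) := by
  have hprime := relIdeal_eq_ker hK (2 * g + 1) α hα
  rw [relIdeal] at hprime
  exact ⟨hprime, by haveI := hprime; exact Ideal.Quotient.isDomain _⟩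
end

section
/- Let K be an algebraically closed field with char(K) ≠ 2, g a positive integer, α_1, …, α_{2g+1} pairwise distinct elements of K, and f(x) = ∏_{i=1}^{2g+1}(x − α_i) ∈ K[x]. Let β be one of the α_i, let U(x) ∈ K[x] be a monic polynomial of degree g with U(β) ≠ 0, and let V(x) ∈ K[x] have degree < g, such that U(x) divides f(x) − V(x)^2. Set V_1(x) = V(x) − (V(β)/U(β))·U(x). Then (x − β)·U(x) divides f(x) − V_1(x)^2. -/
/-!
Subtracting from `V` the multiple of `U` that vanishes at `β` keeps `U ∣ f - V²`, since
`f - (V - cU)² = (f - V²) + U · c(2V - cU)`, and makes `β` a root of `f - V₁²`, because `β` is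
a root of both `f` and `V₁`. As `U(β) ≠ 0`, the factors `X - β` and `U` are coprime, so their
product divides `f - V₁²`.
-/

open Polynomial

theorem dvd_sub_sq_sub_mul {R : Type*} [CommRing R] {f U V : R} (c : R) (h : U ∣ f - V ^ 2) :
    U ∣ f - (V - c * U) ^ 2 := by
  have key : f - (V - c * U) ^ 2 = (f - V ^ 2) + U * (c * (2 * V - c * U)) := by ring
  rw [key]
  exact dvd_add h (dvd_mul_right _ _)

namespace Polynomial

variable {K : Type*} [Field K] {U : K[X]} {β : K}

theorem isCoprime_X_sub_C_of_eval_ne_zero (hU : U.eval β ≠ 0) : IsCoprime (X - C β) U := by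
  rw [(irreducible_X_sub_C β).coprime_iff_not_dvd, dvd_iff_isRoot]
  exact hU

theorem X_sub_C_dvd_sub_C_mul_of_eval_ne_zero (V : K[X]) (hU : U.eval β ≠ 0) :
    X - C β ∣ V - C (V.eval β / U.eval β) * U := by
  rw [dvd_iff_isRoot, IsRoot, eval_sub, eval_mul, eval_C, div_mul_cancel₀ _ hU, sub_self]

end Polynomial

open Polynomial in
theorem dvd_sub_sq_of_shift_general
    {K : Type*} [Field K]
    (g : ℕ) (α : Fin (2 * g + 1) → K)
    (f : K[X]) (hf : f = ∏ i, (X - C (α i)))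
    (i₀ : Fin (2 * g + 1)) (β : K) (hβ : β = α i₀)
    (U : K[X]) (hUβ : U.eval β ≠ 0)
    (V : K[X])
    (hdvd : U ∣ f - V ^ 2)
    (V₁ : K[X]) (hV₁ : V₁ = V - C (V.eval β / U.eval β) * U) :
    (X - C β) * U ∣ f - V₁ ^ 2 := by
  subst hV₁
  have hf_root : X - C β ∣ f := hf ▸ hβ ▸ Finset.dvd_prod_of_mem _ (Finset.mem_univ i₀)
  have hV₁_root : X - C β ∣ (V - C (V.eval β / U.eval β) * U) ^ 2 :=
    dvd_pow (X_sub_C_dvd_sub_C_mul_of_eval_ne_zero V hUβ) two_ne_zero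
  exact (isCoprime_X_sub_C_of_eval_ne_zero hUβ).mul_dvd (dvd_sub hf_root hV₁_root)
    (dvd_sub_sq_sub_mul _ hdvd)

open Polynomial in
/-- Let `K` be algebraically closed with `char K ≠ 2`, `g ≥ 1`,
`α i` pairwise distinct, `f = ∏ (X - C (α i))`, `β` one of the `α i`, `U` monic of
degree `g` with `U(β) ≠ 0`, `V` of degree `< g` with `U ∣ f - V²`.  Set
`V₁ = V - (V(β)/U(β))·U`.  Then `(X - C β) * U` divides `f - V₁²`. -/
theorem dvd_sub_sq_of_shift
    {K : Type*} [Field K] [IsAlgClosed K] (hK : ringChar K ≠ 2)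
    (g : ℕ) (hg : 0 < g) (α : Fin (2 * g + 1) → K) (hα : Function.Injective α)
    (f : K[X]) (hf : f = ∏ i, (X - C (α i)))
    (i₀ : Fin (2 * g + 1)) (β : K) (hβ : β = α i₀)
    (U : K[X]) (hU : U.Monic) (hUdeg : U.natDegree = g) (hUβ : U.eval β ≠ 0)
    (V : K[X]) (hVdeg : V.degree < (g : WithBot ℕ))
    (hdvd : U ∣ f - V ^ 2)
    (V₁ : K[X]) (hV₁ : V₁ = V - C (V.eval β / U.eval β) * U) :
    (X - C β) * U ∣ f - V₁ ^ 2 :=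
  dvd_sub_sq_of_shift_general g α f hf i₀ β hβ U hUβ V hdvd V₁ hV₁
end

section
/- Let K be an algebraically closed field with char(K) ≠ 2, g a positive integer, α_1, …, α_{2g+1} pairwise distinct elements of K, and f(x) = ∏_{i=1}^{2g+1}(x − α_i) ∈ K[x]. Let β be one of the α_i, let U(x) ∈ K[x] be monic of degree g with U(β) ≠ 0, and let V(x) ∈ K[x] with deg V < g and U(x) ∣ f(x) − V(x)^2. Set V_1(x) = V(x) − (V(β)/U(β))·U(x) and Ũ(x) = (f(x) − V_1(x)^2)/((x − β)·U(x)). Then the polynomial V^{[β]}(x) = −V(x) + (V(β)/U(β))·(U(x) − Ũ(x)) has degree < g and is congruent to −V_1(x) modulo Ũ(x); that is, V^{[β]}(x) is the remainder of −V_1(x) upon division by Ũ(x). -/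
/-!
The identity `-V₁ = V^[β] + c · Ũ` with `c = V(β)/U(β)` is a ring identity, so everything rests on
degrees. Since `deg V₁ ≤ g`, the polynomial `f - V₁²` is monic of degree `2g + 1`; its quotient by
the monic `(x - β) U` of degree `g + 1` is monic of degree `g`. Hence `U - Ũ`, a difference of
two monic polynomials of degree `g`, has degree `< g`, and so has `V^[β]`; uniqueness of division
with remainder by the monic `Ũ` concludes.
-/

namespace Polynomial

variable {R : Type*} [CommRing R]

theorem Monic.divByMonic {p q : R[X]} (hp : p.Monic) (hq : q.Monic)
    (hqp : q.natDegree ≤ p.natDegree) : (p /ₘ q).Monic := by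
  nontriviality R
  refine (leadingCoeff_divByMonic_of_monic hq ?_).trans hp
  rw [degree_eq_natDegree hp.ne_zero, degree_eq_natDegree hq.ne_zero]
  exact_mod_cast hqp

theorem Monic.degree_sub_lt_of_natDegree_eq {p q : R[X]} {n : ℕ} (hp : p.Monic) (hq : q.Monic)
    (hpn : p.natDegree = n) (hqn : q.natDegree = n) : (p - q).degree < n := by
  nontriviality R
  have hpq : p.degree = q.degree := by
    rw [degree_eq_natDegree hp.ne_zero, degree_eq_natDegree hq.ne_zero, hpn, hqn]
  have := degree_sub_lt_left hpq hp.ne_zero (hp.leadingCoeff.trans hq.leadingCoeff.symm)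
  rwa [degree_eq_natDegree hp.ne_zero, hpn] at this

theorem Monic.sub_sq_of_natDegree_le {p q : R[X]} {n : ℕ} (hp : p.Monic)
    (hpn : p.natDegree = 2 * n + 1) (hq : q.natDegree ≤ n) :
    (p - q ^ 2).Monic ∧ (p - q ^ 2).natDegree = 2 * n + 1 := by
  have hlt : (q ^ 2).natDegree < p.natDegree := by
    have := natDegree_pow_le (p := q) (n := 2)
    omega
  exact ⟨hp.sub_of_left (degree_lt_degree hlt), natDegree_sub_eq_left_of_natDegree_lt hlt ▸ hpn⟩

end Polynomial

open Polynomial in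
theorem Vbeta_is_remainder_general
    {K : Type*} [Field K]
    (g : ℕ) (α : Fin (2 * g + 1) → K)
    (f : K[X]) (hf : f = ∏ i, (X - C (α i)))
    (β : K)
    (U : K[X]) (hU : U.Monic) (hUdeg : U.natDegree = g)
    (V : K[X]) (hVdeg : V.degree < (g : WithBot ℕ))
    (V₁ : K[X]) (hV₁ : V₁ = V - C (V.eval β / U.eval β) * U)
    (Ut : K[X]) (hUt : Ut = (f - V₁ ^ 2) /ₘ ((X - C β) * U))
    (Vβ : K[X]) (hVβ : Vβ = -V + C (V.eval β / U.eval β) * (U - Ut)) :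
    Vβ.degree < (g : WithBot ℕ) ∧
    Ut ∣ (-V₁ - Vβ) ∧
    Vβ = (-V₁) %ₘ Ut := by
  set c := V.eval β / U.eval β
  have hfm : f.Monic := hf ▸ monic_prod_of_monic _ _ fun i _ => monic_X_sub_C (α i)
  have hfdeg : f.natDegree = 2 * g + 1 := by simp [hf]
  have hV₁deg : V₁.natDegree ≤ g := by
    rw [hV₁]
    refine natDegree_sub_le_of_le (natDegree_le_of_degree_le hVdeg.le) ?_ |>.trans (max_self g).le
    exact (natDegree_C_mul_le c U).trans hUdeg.le
  obtain ⟨hDm, hDdeg⟩ := hfm.sub_sq_of_natDegree_le hfdeg hV₁deg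
  have hXUm : ((X - C β) * U).Monic := (monic_X_sub_C β).mul hU
  have hXUdeg : ((X - C β) * U).natDegree = g + 1 := by
    rw [(monic_X_sub_C β).natDegree_mul hU, natDegree_X_sub_C, hUdeg, add_comm]
  have hUtm : Ut.Monic := hUt ▸ hDm.divByMonic hXUm (by omega)
  have hUtdeg : Ut.natDegree = g := by
    rw [hUt, natDegree_divByMonic _ hXUm, hDdeg, hXUdeg]; omega
  have hVβdeg : Vβ.degree < g := by
    rw [hVβ]
    refine (degree_add_le _ _).trans_lt (max_lt (by rwa [degree_neg]) ?_)
    rw [← smul_eq_C_mul]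
    exact (degree_smul_le _ _).trans_lt (hU.degree_sub_lt_of_natDegree_eq hUtm hUdeg hUtdeg)
  have hrem : Vβ + Ut * C c = -V₁ := by rw [hVβ, hV₁]; ring
  have hVβlt : Vβ.degree < Ut.degree := by rwa [degree_eq_natDegree hUtm.ne_zero, hUtdeg]
  exact ⟨hVβdeg, ⟨C c, by rw [← hrem]; ring⟩, (div_modByMonic_unique _ _ hUtm ⟨hrem, hVβlt⟩).2.symm⟩

open Polynomial in
/-- In the setting of Statement 6, with
`V₁ = V - (V(β)/U(β))·U`, `Ut = (f - V₁²) /ₘ ((X - C β)·U)` and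
`V^[β] = -V + (V(β)/U(β))·(U - Ut)`, the polynomial `V^[β]` has degree `< g`
and is congruent to `-V₁` modulo `Ut`; that is, `V^[β]` is the remainder of
`-V₁` upon division by `Ut`. -/
theorem Vbeta_is_remainder
    {K : Type*} [Field K] [IsAlgClosed K] (hK : ringChar K ≠ 2)
    (g : ℕ) (hg : 0 < g) (α : Fin (2 * g + 1) → K) (hα : Function.Injective α)
    (f : K[X]) (hf : f = ∏ i, (X - C (α i)))
    (i₀ : Fin (2 * g + 1)) (β : K) (hβ : β = α i₀)
    (U : K[X]) (hU : U.Monic) (hUdeg : U.natDegree = g) (hUβ : U.eval β ≠ 0)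
    (V : K[X]) (hVdeg : V.degree < (g : WithBot ℕ))
    (hdvd : U ∣ f - V ^ 2)
    (V₁ : K[X]) (hV₁ : V₁ = V - C (V.eval β / U.eval β) * U)
    (Ut : K[X]) (hUt : Ut = (f - V₁ ^ 2) /ₘ ((X - C β) * U))
    (Vβ : K[X]) (hVβ : Vβ = -V + C (V.eval β / U.eval β) * (U - Ut)) :
    Vβ.degree < (g : WithBot ℕ) ∧
    Ut ∣ (-V₁ - Vβ) ∧
    Vβ = (-V₁) %ₘ Ut :=
  Vbeta_is_remainder_general g α f hf β U hU hUdeg V hVdeg V₁ hV₁ Ut hUt Vβ hVβ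
end

section
/- Let K be an algebraically closed field with char(K) ≠ 2, g a positive integer, α_1, …, α_{2g+1} pairwise distinct elements of K, and f(x) = ∏_{i=1}^{2g+1}(x − α_i) ∈ K[x]. Let β be one of the α_i, let U(x) ∈ K[x] be monic of degree g with U(β) ≠ 0, and let V(x) ∈ K[x] with deg V < g and U(x) ∣ f(x) − V(x)^2. Set V_1(x) = V(x) − (V(β)/U(β))·U(x), Ũ(x) = (f(x) − V_1(x)^2)/((x − β)·U(x)), and V^{[β]}(x) = −V(x) + (V(β)/U(β))·(U(x) − Ũ(x)). Then Ũ(x) divides f(x) − (V^{[β]}(x))^2. -/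
/-!
Set `c = V(β)/U(β)`. Changing `V` by a multiple of `U` keeps `U ∣ f - V²`, and the choice of `c`
makes `V₁ = V - c·U` vanish at the root `β` of `f`; since `U(β) ≠ 0` this gives
`(X - β)·U ∣ f - V₁²`, so `Ũ` is an honest cofactor and `Ũ ∣ f - V₁²`. Finally
`V^[β] = -(V₁ + c·Ũ)`, and changing `V₁` by a multiple of `Ũ` keeps `Ũ ∣ f - V₁²`.
-/

theorem dvd_sub_sq_add_mul {R : Type*} [CommRing R] {a b c : R} (d : R) (h : b ∣ a - c ^ 2) :
    b ∣ a - (c + d * b) ^ 2 := by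
  have hsplit : a - (c + d * b) ^ 2 = (a - c ^ 2) - b * (2 * c * d + d ^ 2 * b) := by ring
  rw [hsplit]
  exact h.sub (dvd_mul_right b _)

namespace Polynomial

theorem divByMonic_dvd_of_dvd {R : Type*} [CommRing R] {p q : R[X]} (hq : q.Monic) (h : q ∣ p) :
    p /ₘ q ∣ p := by
  obtain ⟨k, rfl⟩ := h
  rw [mul_divByMonic_cancel_left k hq]
  exact dvd_mul_left k q

theorem isRoot_sub_C_eval_div_mul {K : Type*} [Field K] (V U : K[X]) {β : K}
    (hU : U.eval β ≠ 0) : (V - C (V.eval β / U.eval β) * U).IsRoot β := by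
  simp [IsRoot, div_mul_cancel₀ _ hU]

theorem isCoprime_X_sub_C_of_not_isRoot {K : Type*} [Field K] {U : K[X]} {β : K}
    (hU : ¬U.IsRoot β) : IsCoprime (X - C β) U :=
  (irreducible_X_sub_C β).coprime_iff_not_dvd.2 (by rwa [dvd_iff_isRoot])

theorem X_sub_C_mul_dvd_of_isRoot {K : Type*} [Field K] {U P : K[X]} {β : K}
    (hUβ : U.eval β ≠ 0) (hP : P.IsRoot β) (hUP : U ∣ P) : (X - C β) * U ∣ P :=
  (isCoprime_X_sub_C_of_not_isRoot hUβ).mul_dvd (dvd_iff_isRoot.2 hP) hUP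

end Polynomial

open Polynomial in
theorem Ut_dvd_f_sub_Vbeta_sq_general
    {K : Type*} [Field K]
    (g : ℕ) (α : Fin (2 * g + 1) → K)
    (f : K[X]) (hf : f = ∏ i, (X - C (α i)))
    (i₀ : Fin (2 * g + 1)) (β : K) (hβ : β = α i₀)
    (U : K[X]) (hU : U.Monic) (hUβ : U.eval β ≠ 0)
    (V : K[X])
    (hdvd : U ∣ f - V ^ 2)
    (V₁ : K[X]) (hV₁ : V₁ = V - C (V.eval β / U.eval β) * U)
    (Ut : K[X]) (hUt : Ut = (f - V₁ ^ 2) /ₘ ((X - C β) * U))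
    (Vβ : K[X]) (hVβ : Vβ = -V + C (V.eval β / U.eval β) * (U - Ut)) :
    Ut ∣ f - Vβ ^ 2 := by
  set c := V.eval β / U.eval β
  have hfβ : f.IsRoot β := by
    rw [hf, hβ, IsRoot, eval_prod]
    exact Finset.prod_eq_zero (Finset.mem_univ i₀) (by simp)
  have hV₁β : V₁.IsRoot β := hV₁ ▸ isRoot_sub_C_eval_div_mul V U hUβ
  have hUV₁ : U ∣ f - V₁ ^ 2 := by
    rw [hV₁, show V - C c * U = V + -C c * U by ring]
    exact dvd_sub_sq_add_mul _ hdvd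
  have hprod : (X - C β) * U ∣ f - V₁ ^ 2 :=
    X_sub_C_mul_dvd_of_isRoot hUβ (by simp [hfβ.eq_zero, hV₁β.eq_zero]) hUV₁
  have hUtV₁ : Ut ∣ f - V₁ ^ 2 := hUt ▸ divByMonic_dvd_of_dvd ((monic_X_sub_C β).mul hU) hprod
  have hVβ' : Vβ = -(V₁ + C c * Ut) := by rw [hVβ, hV₁]; ring
  rw [hVβ', neg_sq]
  exact dvd_sub_sq_add_mul _ hUtV₁

open Polynomial in
/-- In the setting of Statement 6, with
`V₁ = V - (V(β)/U(β))·U`, `Ut = Ũ = (f - V₁²) /ₘ ((X - C β)·U)` and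
`Vβ = V^[β] = -V + (V(β)/U(β))·(U - Ũ)`, the polynomial `Ũ` divides
`f - (V^[β])²`. -/
theorem Ut_dvd_f_sub_Vbeta_sq
    {K : Type*} [Field K] [IsAlgClosed K] (hK : ringChar K ≠ 2)
    (g : ℕ) (hg : 0 < g) (α : Fin (2 * g + 1) → K) (hα : Function.Injective α)
    (f : K[X]) (hf : f = ∏ i, (X - C (α i)))
    (i₀ : Fin (2 * g + 1)) (β : K) (hβ : β = α i₀)
    (U : K[X]) (hU : U.Monic) (hUdeg : U.natDegree = g) (hUβ : U.eval β ≠ 0)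
    (V : K[X]) (hVdeg : V.degree < (g : WithBot ℕ))
    (hdvd : U ∣ f - V ^ 2)
    (V₁ : K[X]) (hV₁ : V₁ = V - C (V.eval β / U.eval β) * U)
    (Ut : K[X]) (hUt : Ut = (f - V₁ ^ 2) /ₘ ((X - C β) * U))
    (Vβ : K[X]) (hVβ : Vβ = -V + C (V.eval β / U.eval β) * (U - Ut)) :
    Ut ∣ f - Vβ ^ 2 :=
  Ut_dvd_f_sub_Vbeta_sq_general g α f hf i₀ β hβ U hU hUβ V hdvd V₁ hV₁ Ut hUt Vβ hVβ
end

section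
/- Let K be an algebraically closed field with char(K) ≠ 2, g a positive integer, and α_1, …, α_{2g+1} pairwise distinct elements of K. Let a, b ∈ K satisfy b^2 = ∏_{i=1}^{2g+1}(a − α_i). Let ε = (ε_1, …, ε_{2g+1}) ∈ {1, −1}^{2g+1} with ∏_{i=1}^{2g+1} ε_i = 1. If for every tuple (r_1, …, r_{2g+1}) ∈ K^{2g+1} satisfying r_i^2 = a − α_i for all i and ∏_{i=1}^{2g+1} r_i = −b one has ε_i·r_i = r_i for all i, then ε_i = 1 for all i. -/
/-!
Square roots `s i` of `a - α i` exist since `K` is algebraically closed, and `∏ s i = ±b`;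
flipping the sign of one `s i` if necessary gives a point `r` of the fiber. As `ε` fixes `r`,
`ε i = 1` wherever `r i ≠ 0`, i.e. wherever `a ≠ α i`. By injectivity of `α` this leaves at most
one index, and there `ε i = 1` follows from `∏ ε i = 1`.
-/

theorem Finset.prod_update_neg {ι R : Type*} [CommRing R] [Fintype ι] [DecidableEq ι]
    (s : ι → R) (i : ι) : ∏ j, Function.update s i (-s i) j = -∏ j, s j := by
  rw [Finset.prod_update_of_mem (Finset.mem_univ i),
    Finset.prod_eq_mul_prod_sdiff_singleton_of_mem (Finset.mem_univ i) s, neg_mul]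

theorem exists_sq_eq_and_prod_eq_neg {ι R : Type*} [CommRing R] [NoZeroDivisors R]
    [Fintype ι] [Nonempty ι] {c : ι → R} (hc : ∀ i, ∃ s, s ^ 2 = c i)
    {b : R} (hb : b ^ 2 = ∏ i, c i) :
    ∃ r : ι → R, (∀ i, r i ^ 2 = c i) ∧ ∏ i, r i = -b := by
  classical
  choose s hs using hc
  have hsq : (∏ i, s i) ^ 2 = b ^ 2 := by simp only [← Finset.prod_pow, hs, hb]
  rcases sq_eq_sq_iff_eq_or_eq_neg.mp hsq with hpos | hneg
  · let i₀ := Classical.arbitrary ι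
    refine ⟨Function.update s i₀ (-s i₀), fun i => ?_, by rw [Finset.prod_update_neg, hpos]⟩
    rcases eq_or_ne i i₀ with rfl | hi
    · rw [Function.update_self, neg_sq, hs]
    · rw [Function.update_of_ne hi, hs]
  · exact ⟨s, hs, hneg⟩

theorem sign_vector_fixing_fiber_is_trivial_general
    {K : Type*} [Field K] [IsAlgClosed K]
    (g : ℕ) (α : Fin (2 * g + 1) → K) (hα : Function.Injective α)
    (a b : K) (hab : b ^ 2 = ∏ i, (a - α i))
    (ε : Fin (2 * g + 1) → K)
    (hεprod : ∏ i, ε i = 1)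
    (hfix : ∀ r : Fin (2 * g + 1) → K,
      (∀ i, r i ^ 2 = a - α i) → (∏ i, r i) = -b → ∀ i, ε i * r i = r i) :
    ∀ i, ε i = 1 := by
  obtain ⟨r, hr, hprod⟩ := exists_sq_eq_and_prod_eq_neg
    (fun i => IsAlgClosed.exists_pow_nat_eq (a - α i) two_pos) hab
  have fixed : ∀ i, a - α i ≠ 0 → ε i = 1 := fun i hi =>
    (mul_eq_right₀ fun hri => hi (by rw [← hr i, hri, zero_pow two_ne_zero])).mp
      (hfix r hr hprod i)
  intro j
  by_cases hj : a - α j = 0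
  · have others : ∀ i ∈ Finset.univ, i ≠ j → ε i = 1 := fun i _ hij =>
      fixed i fun hi => hij (hα (by linear_combination hj - hi))
    rw [← hεprod, Finset.prod_eq_single j others (absurd (Finset.mem_univ j))]
  · exact fixed j hj

/-- Let `K` be algebraically closed with `char K ≠ 2`, `g ≥ 1`,
`α i` pairwise distinct, and `a, b ∈ K` with `b² = ∏ (a - α i)`.  Let `ε` be a
vector of signs `±1` with `∏ ε i = 1`.  If `ε` fixes every tuple
`(r 1, …, r (2g+1))` of square roots `r i² = a - α i` with `∏ r i = -b`
(coordinatewise, `ε i * r i = r i`), then `ε i = 1` for all `i`. -/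
theorem sign_vector_fixing_fiber_is_trivial
    {K : Type*} [Field K] [IsAlgClosed K] (hK : ringChar K ≠ 2)
    (g : ℕ) (hg : 0 < g) (α : Fin (2 * g + 1) → K) (hα : Function.Injective α)
    (a b : K) (hab : b ^ 2 = ∏ i, (a - α i))
    (ε : Fin (2 * g + 1) → K) (hε : ∀ i, ε i = 1 ∨ ε i = -1)
    (hεprod : ∏ i, ε i = 1)
    (hfix : ∀ r : Fin (2 * g + 1) → K,
      (∀ i, r i ^ 2 = a - α i) → (∏ i, r i) = -b → ∀ i, ε i * r i = r i) :
    ∀ i, ε i = 1 :=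
  sign_vector_fixing_fiber_is_trivial_general g α hα a b hab ε hεprod hfix
end

section
/- Let K be an algebraically closed field with char(K) ≠ 2, g a positive integer, and α_1, …, α_{2g+1} pairwise distinct elements of K. Let a, b ∈ K satisfy b^2 = ∏_{i=1}^{2g+1}(a − α_i) and b ≠ 0. Then the set {(r_1, …, r_{2g+1}) ∈ K^{2g+1} : r_i^2 = a − α_i for all i, and ∏_{i=1}^{2g+1} r_i = −b} has exactly 2^{2g} elements. -/
/-!
Every coordinate `r i` is one of the two square roots `± sᵢ` of `a - α i`, which are distinct
and nonzero, so there are `2 ^ (2g+1)` tuples of square roots. Their products square to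
`∏ (a - α i) = b²`, so they are `b` or `-b`, and flipping the sign of one coordinate swaps
these two classes; each therefore holds half of the tuples.
-/

section CommRing

variable {R : Type*} [CommRing R] {ι : Type*} [Fintype ι]

def squareRootTuples (x : ι → R) (c : R) : Set (ι → R) :=
  {r | (∀ i, r i ^ 2 = x i) ∧ ∏ i, r i = c}

theorem encard_squareRootTuples_neg [Nonempty ι] (x : ι → R) (c : R) :
    (squareRootTuples x (-c)).encard = (squareRootTuples x c).encard := by
  classical
  obtain ⟨i₀⟩ := ‹Nonempty ι›
  set e : ι → R := Pi.mulSingle i₀ (-1)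
  have he : e * e = 1 := by
    ext i
    by_cases h : i = i₀ <;> simp [e, h]
  have hsq (r : ι → R) (i : ι) : (e * r) i ^ 2 = r i ^ 2 := by
    rw [Pi.mul_apply, mul_pow, sq (e i), ← Pi.mul_apply e e, he, Pi.one_apply, one_mul]
  have hprod (r : ι → R) : ∏ i, (e * r) i = -∏ i, r i := by
    simp [e, Finset.prod_mul_distrib, Finset.prod_pi_mulSingle']
  have hpre : squareRootTuples x (-c) = (e * ·) ⁻¹' squareRootTuples x c := by
    ext r
    simp only [squareRootTuples, Set.mem_preimage, Set.mem_ofPred_eq, hsq, hprod,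
      neg_eq_iff_eq_neg]
  have hinv : Function.Involutive (e * · : (ι → R) → ι → R) := fun r => by
    simp only [← mul_assoc, he, one_mul]
  rw [hpre, Set.encard_preimage_of_bijective hinv.bijective]

end CommRing

section IsAlgClosed

variable {K : Type*} [Field K] [IsAlgClosed K] {ι : Type*} [Fintype ι]

theorem encard_setOf_sq_eq (hK : ringChar K ≠ 2) {x : K} (hx : x ≠ 0) :
    {y : K | y ^ 2 = x}.encard = 2 := by
  obtain ⟨s, rfl⟩ := IsAlgClosed.exists_pow_nat_eq x two_pos
  have hs : s ≠ 0 := by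
    rintro rfl
    simp at hx
  have hpair : {y : K | y ^ 2 = s ^ 2} = {s, -s} := by
    ext y
    simp [sq_eq_sq_iff_eq_or_eq_neg]
  rw [hpair, Set.encard_pair]
  exact fun h => hs ((Ring.eq_self_iff_eq_zero_of_char_ne_two hK).mp h.symm)

theorem encard_setOf_forall_sq_eq (hK : ringChar K ≠ 2) {x : ι → K} (hx : ∀ i, x i ≠ 0) :
    {r : ι → K | ∀ i, r i ^ 2 = x i}.encard = 2 ^ Fintype.card ι := by
  have hpi : {r : ι → K | ∀ i, r i ^ 2 = x i} = Set.univ.pi fun i => {y | y ^ 2 = x i} := by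
    ext
    simp
  simp [hpi, encard_setOf_sq_eq hK (hx _)]

theorem encard_squareRootTuples (hK : ringChar K ≠ 2) {x : ι → K} (hx : ∀ i, x i ≠ 0)
    {c : K} (hc : c ^ 2 = ∏ i, x i) {n : ℕ} (hn : Fintype.card ι = n + 1) :
    (squareRootTuples x c).encard = 2 ^ n := by
  have : Nonempty ι := Fintype.card_pos_iff.mp (by omega)
  have hc0 : c ≠ 0 := by
    rintro rfl
    exact Finset.prod_ne_zero_iff.mpr (fun i _ => hx i) (by simpa using hc.symm)
  have hunion : {r : ι → K | ∀ i, r i ^ 2 = x i} =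
      squareRootTuples x c ∪ squareRootTuples x (-c) := by
    ext r
    simp only [squareRootTuples, Set.mem_ofPred_eq, Set.mem_union, ← and_or_left,
      iff_self_and]
    intro hr
    rw [← sq_eq_sq_iff_eq_or_eq_neg, hc, ← Finset.prod_pow]
    exact Finset.prod_congr rfl fun i _ => hr i
  have hdisj : Disjoint (squareRootTuples x c) (squareRootTuples x (-c)) :=
    Set.disjoint_left.mpr fun r hr hr' =>
      hc0 ((Ring.eq_self_iff_eq_zero_of_char_ne_two hK).mp (hr'.2.symm.trans hr.2))
  have hcount := encard_setOf_forall_sq_eq hK hx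
  rw [hunion, Set.encard_union_eq hdisj, encard_squareRootTuples_neg, hn, pow_succ, mul_two]
    at hcount
  generalize (squareRootTuples x c).encard = m at hcount
  induction m using ENat.recTopCoe with
  | top => norm_cast at hcount
  | coe m =>
    norm_cast at hcount ⊢
    omega

end IsAlgClosed

theorem fiber_ncard_eq_two_pow_general
    {K : Type*} [Field K] [IsAlgClosed K] (hK : ringChar K ≠ 2)
    (g : ℕ) (α : Fin (2 * g + 1) → K)
    (a b : K) (hab : b ^ 2 = ∏ i, (a - α i)) (hb : b ≠ 0) :
    Set.ncard {r : Fin (2 * g + 1) → K |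
      (∀ i, r i ^ 2 = a - α i) ∧ (∏ i, r i) = -b} = 2 ^ (2 * g) := by
  have hx (i : Fin (2 * g + 1)) : a - α i ≠ 0 := fun hi =>
    hb (pow_eq_zero_iff two_ne_zero |>.mp (hab.trans (Finset.prod_eq_zero (Finset.mem_univ i) hi)))
  have hfiber := encard_squareRootTuples hK hx (c := -b) (by rw [neg_sq, hab]) (Fintype.card_fin _)
  change (squareRootTuples (fun i => a - α i) (-b)).ncard = _
  rw [Set.ncard_def, hfiber]
  simp

/-- Let `K` be algebraically closed with `char K ≠ 2`, `g ≥ 1`,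
`α i` pairwise distinct, and `a, b ∈ K` with `b² = ∏ (a - α i)` and `b ≠ 0`.
Then the set of tuples `(r 1, …, r (2g+1))` with `r i² = a - α i` for all `i` and
`∏ r i = -b` has exactly `2^(2g)` elements. -/
theorem fiber_ncard_eq_two_pow
    {K : Type*} [Field K] [IsAlgClosed K] (hK : ringChar K ≠ 2)
    (g : ℕ) (hg : 0 < g) (α : Fin (2 * g + 1) → K) (hα : Function.Injective α)
    (a b : K) (hab : b ^ 2 = ∏ i, (a - α i)) (hb : b ≠ 0) :
    Set.ncard {r : Fin (2 * g + 1) → K |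
      (∀ i, r i ^ 2 = a - α i) ∧ (∏ i, r i) = -b} = 2 ^ (2 * g) :=
  fiber_ncard_eq_two_pow_general hK g α a b hab hb
end
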